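/- In the piecewise setting on [−1,1], for every integer N ≥ 1 the cross terms satisfy Σ_{n=N}^∞ |A_n|·|B_n| ≤ √2·L·(K+1)·S·ζ(3/2, N), where A_n = −(1/(2√(2n+1)))·Σ_{i=1}^{K+1} ∫_{b_{i−1}}^{b_i} g_i'(y)·(P_{n+1}(y) − P_{n−1}(y)) dy, B_n = (1/(2√(2n+1)))·Σ_{i=1}^{K} (g_i(b_i) − g_{i+1}(b_i))·(P_{n+1}(b_i) − P_{n−1}(b_i)), and S = Σ_{i=1}^K |g_{i+1}(b_i) − g_i(b_i)|. In particular this uses the comparison Σ_{n=N}^∞ (2n−1)^{−3/2} ≤ ζ(3/2, N). -/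

import Mathlib

/-!
The cross terms are bounded factor by factor. On each piece `|g_i'| ≤ L`, so `|A_n|` is at most
`(K + 1) L` times the `L¹` norm of `P_{n+1} - P_{n-1}` over `[-1, 1]`; Cauchy–Schwarz (in the
form `|u| ≤ u² / (2t) + t / 2`) and `∫ P_n² = 2 / (2n + 1)` bound that norm by `4 / √(2n - 1)`.
Since `|P_n| ≤ 1` on `[-1, 1]`, `|B_n| ≤ S / √(2n + 1)`. Hence `|A_n| |B_n| ≤ (K + 1) L S n^(-3/2)`,
and summing over `n ≥ N` gives `ζ(3/2, N)`, which also dominates `∑ (2n - 1)^(-3/2)` termwise.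

The value of `∫ P_n²` comes from integrating Rodrigues' formula by parts `n` times. The bound
`|P_n| ≤ 1` comes from Legendre's equation, which makes `n(n+1) P_n² + (1 - x²) P_n'²`
decrease on `[-1, 0]` and increase on `[0, 1]`, while it equals `n(n+1)` at `±1`.
-/

open MeasureTheory Set

noncomputable def legendreP (n : ℕ) (y : ℝ) : ℝ :=
  (1 / ((2 : ℝ) ^ n * (n.factorial : ℝ))) *
    iteratedDeriv n (fun x : ℝ => (x ^ 2 - 1) ^ n) y

noncomputable def hzeta (s a : ℝ) : ℝ := ∑' k : ℕ, ((k : ℝ) + a) ^ (-s)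

noncomputable def legCoeff (g : ℝ → ℝ) (n : ℕ) : ℝ :=
  (Real.sqrt (2 * (n : ℝ) + 1) / 2) * ∫ y in (-1 : ℝ)..1, g y * legendreP n y

noncomputable def Aterm (K : ℕ) (b : ℕ → ℝ) (G : ℕ → ℝ → ℝ) (n : ℕ) : ℝ :=
  -(1 / (2 * Real.sqrt (2 * (n : ℝ) + 1))) *
    ∑ i ∈ Finset.range (K + 1),
      ∫ y in (b i)..(b (i + 1)),
        derivWithin (G i) (Set.Icc (b i) (b (i + 1))) y *
          (legendreP (n + 1) y - legendreP (n - 1) y)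

noncomputable def Bterm (K : ℕ) (b : ℕ → ℝ) (G : ℕ → ℝ → ℝ) (n : ℕ) : ℝ :=
  (1 / (2 * Real.sqrt (2 * (n : ℝ) + 1))) *
    ∑ i ∈ Finset.Icc 1 K,
      (G (i - 1) (b i) - G i (b i)) *
        (legendreP (n + 1) (b i) - legendreP (n - 1) (b i))

noncomputable def jumpSum (K : ℕ) (b : ℕ → ℝ) (G : ℕ → ℝ → ℝ) : ℝ :=
  ∑ i ∈ Finset.Icc 1 K, |G i (b i) - G (i - 1) (b i)|

open Polynomial Nat

section

variable {R : Type*} [CommRing R]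

theorem eval_iterate_derivative_X_sub_C_pow_mul_of_lt {j n : ℕ} (hj : j < n) (c : R) (q : R[X]) :
    (derivative^[j] ((X - C c) ^ n * q)).eval c = 0 :=
  dvd_iff_isRoot.mp <| (dvd_pow_self _ (Nat.sub_ne_zero_of_lt hj)).trans
    (pow_sub_dvd_iterate_derivative_of_pow_dvd j (dvd_mul_right _ _))

theorem eval_iterate_derivative_X_sub_C_pow_mul_self (n : ℕ) (c : R) (q : R[X]) :
    (derivative^[n] ((X - C c) ^ n * q)).eval c = n ! * q.eval c := by
  rw [iterate_derivative_mul, eval_finsetSum, Finset.sum_eq_single_of_mem 0 (by simp)]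
  · simp [iterate_derivative_X_sub_pow_self]
  · intro k hk hk0
    rw [iterate_derivative_X_sub_pow, eval_smul, eval_mul, eval_smul, eval_pow,
      Nat.sub_sub_self (Finset.mem_range_succ_iff.mp hk), eval_sub, eval_X, eval_C, sub_self,
      zero_pow hk0, smul_zero, zero_mul, smul_zero]

theorem X_sq_sub_one_eq_mul {c : R} (hc : c ^ 2 = 1) :
    (X ^ 2 - 1 : R[X]) = (X - C c) * (X + C c) := by
  rw [← C_1, ← hc, C_pow]; ring

theorem eval_iterate_derivative_X_sq_sub_one_pow_of_lt {j n : ℕ} (hj : j < n) {c : R}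
    (hc : c ^ 2 = 1) : (derivative^[j] ((X ^ 2 - 1 : R[X]) ^ n)).eval c = 0 := by
  rw [X_sq_sub_one_eq_mul hc, mul_pow, eval_iterate_derivative_X_sub_C_pow_mul_of_lt hj]

theorem X_sq_sub_one_mul_derivative_pow (n : ℕ) :
    (X ^ 2 - 1 : R[X]) * derivative ((X ^ 2 - 1) ^ n)
      = ((2 * n : ℕ) : R[X]) * ((X ^ 2 - 1) ^ n * X) := by
  cases n with
  | zero => simp
  | succ n =>
    rw [derivative_pow]
    simp only [derivative_sub, derivative_X_pow, derivative_one, Nat.add_sub_cancel, C_eq_natCast]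
    push_cast
    ring

theorem iterate_derivative_X_sq_sub_one_pow_ode (n : ℕ) :
    (X ^ 2 - 1 : R[X]) * derivative^[n + 2] ((X ^ 2 - 1) ^ n)
        + 2 * X * derivative^[n + 1] ((X ^ 2 - 1) ^ n)
      = (n : R[X]) * ((n : R[X]) + 1) * derivative^[n] ((X ^ 2 - 1) ^ n) := by
  set U : R[X] := (X ^ 2 - 1) ^ n
  have h := congrArg (derivative^[n + 1]) (X_sq_sub_one_mul_derivative_pow (R := R) n)
  rw [show (X ^ 2 - 1 : R[X]) * derivative U = derivative U * X * X - derivative U by ring,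
    iterate_derivative_sub, iterate_derivative_mul_X, iterate_derivative_derivative_mul_X,
    Nat.add_sub_cancel, iterate_derivative_derivative_mul_X, iterate_derivative_natCast_mul,
    iterate_derivative_mul_X, Nat.add_sub_cancel, ← Function.iterate_succ_apply] at h
  simp only [nsmul_eq_mul] at h
  push_cast at h
  linear_combination h

theorem iterate_derivative_natDegree_of_monic {p : R[X]} (hp : p.Monic) :
    derivative^[p.natDegree] p = C (p.natDegree ! : R) := by
  rw [eq_C_of_natDegree_le_zero (p := derivative^[p.natDegree] p)
      (by have := natDegree_iterate_derivative p p.natDegree; omega),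
    coeff_iterate_derivative, zero_add, hp.coeff_natDegree, Nat.descFactorial_self, nsmul_one]

end

noncomputable def legendrePoly (n : ℕ) : ℝ[X] :=
  C (1 / (2 ^ n * n ! : ℝ)) * derivative^[n] ((X ^ 2 - 1) ^ n)

theorem iteratedDeriv_eval (k : ℕ) (p : ℝ[X]) :
    iteratedDeriv k (fun x => p.eval x) = fun x => (derivative^[k] p).eval x := by
  induction k generalizing p with
  | zero => simp
  | succ k ih =>
    rw [iteratedDeriv_succ', show (deriv fun x => p.eval x) = fun x => (derivative p).eval x from
      _root_.funext fun _ => p.deriv, ih, Function.iterate_succ_apply]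

theorem legendreP_eq_eval (n : ℕ) (y : ℝ) : legendreP n y = (legendrePoly n).eval y := by
  have hU : (fun x : ℝ => (x ^ 2 - 1) ^ n) = fun x => ((X ^ 2 - 1 : ℝ[X]) ^ n).eval x := by
    simp
  rw [legendreP, hU, iteratedDeriv_eval, legendrePoly, eval_mul, eval_C]

@[fun_prop]
theorem continuous_legendreP (n : ℕ) : Continuous (legendreP n) := by
  simpa only [funext (legendreP_eq_eval n)] using (legendrePoly n).continuous

theorem eval_legendrePoly_of_sq_eq_one {c : ℝ} (hc : c ^ 2 = 1) (n : ℕ) :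
    (legendrePoly n).eval c = c ^ n := by
  have h2 : (2 : ℝ) ^ n * n ! ≠ 0 := by positivity
  rw [legendrePoly, eval_mul, eval_C, X_sq_sub_one_eq_mul hc, mul_pow,
    eval_iterate_derivative_X_sub_C_pow_mul_self]
  simp only [eval_pow, eval_add, eval_X, eval_C]
  field_simp
  rw [show c * (1 + 1) = 2 * c by ring, mul_pow]

theorem legendrePoly_ode (n : ℕ) :
    (X ^ 2 - 1) * derivative (derivative (legendrePoly n)) + 2 * X * derivative (legendrePoly n)
      = (n : ℝ[X]) * ((n : ℝ[X]) + 1) * legendrePoly n := by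
  simp only [legendrePoly, derivative_C_mul, ← Function.iterate_succ_apply' derivative]
  linear_combination C (1 / (2 ^ n * n ! : ℝ)) * iterate_derivative_X_sq_sub_one_pow_ode (R := ℝ) n

theorem iterate_derivative_legendrePoly_self (n : ℕ) :
    derivative^[n] (legendrePoly n) = C ((2 * n)! / (2 ^ n * n ! : ℝ)) := by
  have hmonic : (X ^ 2 - C 1 : ℝ[X]).Monic := monic_X_pow_sub_C 1 two_ne_zero
  have hdeg : ((X ^ 2 - C 1 : ℝ[X]) ^ n).natDegree = 2 * n := by
    rw [hmonic.natDegree_pow, natDegree_X_pow_sub_C, mul_comm]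
  have hU := iterate_derivative_natDegree_of_monic (hmonic.pow n)
  rw [hdeg, C_1] at hU
  rw [legendrePoly, iterate_derivative_C_mul, ← Function.iterate_add_apply, ← two_mul, hU, ← C_mul,
    one_div_mul_eq_div]

theorem le_max_of_mul_deriv_nonneg {f : ℝ → ℝ} (hf : Differentiable ℝ f)
    (h : ∀ x, 0 ≤ x * deriv f x) {a b y : ℝ} (ha : a ≤ 0) (hb : 0 ≤ b) (hy : y ∈ Icc a b) :
    f y ≤ max (f a) (f b) := by
  rcases le_total y 0 with hy0 | hy0
  · refine le_max_of_le_left <| antitoneOn_of_deriv_nonpos (convex_Icc a 0)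
      hf.continuous.continuousOn hf.differentiableOn (fun x hx => ?_) ⟨le_rfl, ha⟩ ⟨hy.1, hy0⟩ hy.1
    rw [interior_Icc] at hx
    exact nonpos_of_mul_nonneg_right (h x) hx.2
  · refine le_max_of_le_right <| monotoneOn_of_deriv_nonneg (convex_Icc 0 b)
      hf.continuous.continuousOn hf.differentiableOn (fun x hx => ?_) ⟨hy0, hy.2⟩ ⟨hb, le_rfl⟩ hy.2
    rw [interior_Icc] at hx
    exact nonneg_of_mul_nonneg_right (h x) hx.1

theorem sq_eval_legendrePoly_le_one (n : ℕ) {y : ℝ} (hy : y ∈ Icc (-1 : ℝ) 1) :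
    (legendrePoly n).eval y ^ 2 ≤ 1 := by
  rcases Nat.eq_zero_or_pos n with rfl | hn
  · simp [legendrePoly]
  set P := legendrePoly n
  set c : ℝ := n * (n + 1)
  have hc : 0 < c := by positivity
  set E : ℝ → ℝ := fun x => c * P.eval x ^ 2 + (1 - x ^ 2) * (derivative P).eval x ^ 2
  have hE : ∀ x, HasDerivAt E (2 * x * (derivative P).eval x ^ 2) x := by
    intro x
    have hode := congrArg (eval x) (legendrePoly_ode n)
    simp only [eval_add, eval_mul, eval_sub, eval_pow, eval_X, eval_one, eval_ofNat,
      eval_natCast] at hode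
    refine ((((P.hasDerivAt x).pow 2).const_mul c).add
      ((((hasDerivAt_id x).pow 2).const_sub 1).mul
        (((derivative P).hasDerivAt x).pow 2))).congr_deriv ?_
    simp only [Pi.pow_apply, id]
    linear_combination (-2 * (derivative P).eval x) * hode
  have hEy : E y ≤ c := by
    have hEpm : ∀ t : ℝ, t ^ 2 = 1 → E t = c := fun t ht => by
      simp only [E, P, eval_legendrePoly_of_sq_eq_one ht, ← pow_mul, ht, sub_self]
      rw [mul_comm n 2, pow_mul, ht]
      ring
    have := le_max_of_mul_deriv_nonneg (fun x => (hE x).differentiableAt)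
      (fun x => by rw [(hE x).deriv]; nlinarith [sq_nonneg (x * (derivative P).eval x)])
      (by norm_num) zero_le_one hy
    rwa [hEpm (-1) (by norm_num), hEpm 1 (by norm_num), max_self] at this
  have hcy : c * P.eval y ^ 2 ≤ E y := by
    have : 0 ≤ 1 - y ^ 2 := by nlinarith [hy.1, hy.2]
    simp only [E]
    nlinarith [mul_nonneg this (sq_nonneg ((derivative P).eval y))]
  nlinarith

theorem abs_legendreP_le_one (n : ℕ) {y : ℝ} (hy : y ∈ Icc (-1 : ℝ) 1) : |legendreP n y| ≤ 1 := by
  rw [← sq_le_one_iff_abs_le_one, legendreP_eq_eval]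
  exact sq_eval_legendrePoly_le_one n hy

theorem integral_eval_mul_eval_derivative {p q : ℝ[X]} (h1 : q.eval 1 = 0) (hm1 : q.eval (-1) = 0) :
    ∫ y in (-1 : ℝ)..1, p.eval y * (derivative q).eval y
      = -∫ y in (-1 : ℝ)..1, (derivative p).eval y * q.eval y := by
  rw [intervalIntegral.integral_mul_deriv_eq_deriv_mul (fun x _ => p.hasDerivAt x)
    (fun x _ => q.hasDerivAt x) ((Polynomial.continuous _).intervalIntegrable _ _)
    ((Polynomial.continuous _).intervalIntegrable _ _), h1, hm1]
  ring

theorem integral_eval_mul_iterate_derivative_X_sq_sub_one_pow (p : ℝ[X]) {n k : ℕ} (hk : k ≤ n) :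
    ∫ y in (-1 : ℝ)..1, p.eval y * (derivative^[n] ((X ^ 2 - 1) ^ n)).eval y
      = (-1) ^ k * ∫ y in (-1 : ℝ)..1,
          (derivative^[k] p).eval y * (derivative^[n - k] ((X ^ 2 - 1) ^ n)).eval y := by
  induction k with
  | zero => simp
  | succ k ih =>
    have hroot : ∀ c : ℝ, c ^ 2 = 1 →
        (derivative^[n - (k + 1)] ((X ^ 2 - 1 : ℝ[X]) ^ n)).eval c = 0 :=
      fun c hc => eval_iterate_derivative_X_sq_sub_one_pow_of_lt (by omega) hc
    rw [ih (by omega), show n - k = n - (k + 1) + 1 by omega, Function.iterate_succ_apply',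
      integral_eval_mul_eval_derivative (hroot 1 (by norm_num)) (hroot (-1) (by norm_num)),
      ← Function.iterate_succ_apply' derivative k, pow_succ]
    ring

theorem integral_X_sq_sub_one_pow_succ (n : ℕ) :
    (2 * n + 3) * ∫ y in (-1 : ℝ)..1, ((X ^ 2 - 1 : ℝ[X]) ^ (n + 1)).eval y
      = -(2 * (n + 1)) * ∫ y in (-1 : ℝ)..1, ((X ^ 2 - 1 : ℝ[X]) ^ n).eval y := by
  have hroot : ∀ c : ℝ, c ^ 2 = 1 → ((X ^ 2 - 1 : ℝ[X]) ^ (n + 1)).eval c = 0 := fun c hc => by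
    simp [hc]
  have hibp := integral_eval_mul_eval_derivative (p := X) (hroot 1 (by norm_num))
    (hroot (-1) (by norm_num))
  have hX : X * derivative ((X ^ 2 - 1 : ℝ[X]) ^ (n + 1))
      = C (2 * (n + 1) : ℝ) * ((X ^ 2 - 1) ^ (n + 1) + (X ^ 2 - 1) ^ n) := by
    rw [derivative_pow]
    simp only [derivative_sub, derivative_X_pow, derivative_one, Nat.add_sub_cancel,
      map_mul, map_add, map_natCast, map_one, map_ofNat]
    push_cast
    ring
  simp only [← eval_mul, hX] at hibp
  simp only [eval_mul, eval_C, eval_add, derivative_X, one_mul,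
    intervalIntegral.integral_const_mul] at hibp
  rw [intervalIntegral.integral_add ((Polynomial.continuous _).intervalIntegrable _ _)
    ((Polynomial.continuous _).intervalIntegrable _ _)] at hibp
  linear_combination hibp

theorem factorial_mul_integral_X_sq_sub_one_pow (n : ℕ) :
    (2 * n + 1)! * ∫ y in (-1 : ℝ)..1, ((X ^ 2 - 1 : ℝ[X]) ^ n).eval y
      = (-1) ^ n * 2 ^ (2 * n + 1) * (n ! : ℝ) ^ 2 := by
  induction n with
  | zero => norm_num
  | succ n ih =>
    have hrec := integral_X_sq_sub_one_pow_succ n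
    have hfac : ((2 * (n + 1) + 1)! : ℝ) = (2 * n + 3) * (2 * n + 2) * (2 * n + 1)! := by
      rw [show 2 * (n + 1) + 1 = 2 * n + 1 + 1 + 1 by ring, Nat.factorial_succ, Nat.factorial_succ]
      push_cast
      ring
    rw [hfac, Nat.factorial_succ n]
    push_cast
    linear_combination (2 * n + 2) * ((2 * n + 1)! : ℝ) * hrec - (2 * (n : ℝ) + 2) ^ 2 * ih

theorem integral_sq_legendreP (n : ℕ) :
    ∫ y in (-1 : ℝ)..1, legendreP n y ^ 2 = 2 / (2 * n + 1) := by
  have hint := integral_eval_mul_iterate_derivative_X_sq_sub_one_pow (legendrePoly n) (le_refl n)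
  rw [iterate_derivative_legendrePoly_self, Nat.sub_self, Function.iterate_zero_apply] at hint
  simp only [eval_C, intervalIntegral.integral_const_mul] at hint
  have hJ := factorial_mul_integral_X_sq_sub_one_pow n
  have hsq : ∀ y, legendreP n y ^ 2 = 1 / (2 ^ n * n ! : ℝ) *
      ((legendrePoly n).eval y * (derivative^[n] ((X ^ 2 - 1 : ℝ[X]) ^ n)).eval y) := fun y => by
    rw [legendreP_eq_eval, sq]
    nth_rewrite 2 [legendrePoly]
    rw [eval_mul, eval_C]
    ring
  simp only [hsq, intervalIntegral.integral_const_mul, hint]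
  rw [Nat.factorial_succ] at hJ
  have hsign : ((-1 : ℝ) ^ n) ^ 2 = 1 := by rw [← pow_mul, mul_comm, pow_mul]; norm_num
  have h2n : ((2 * n)! : ℝ) ≠ 0 := by positivity
  field_simp
  push_cast at hJ
  linear_combination (-1 : ℝ) ^ n * hJ + 2 ^ (2 * n + 1) * (n ! : ℝ) ^ 2 * hsign

theorem integral_abs_le_integral_sq_div_add {f : ℝ → ℝ} (hf : Continuous f) {a b t : ℝ}
    (hab : a ≤ b) (ht : 0 < t) :
    ∫ x in a..b, |f x| ≤ (∫ x in a..b, f x ^ 2) / (2 * t) + t * (b - a) / 2 := by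
  have hpt : ∀ x, |f x| ≤ f x ^ 2 / (2 * t) + t / 2 := fun x => by
    rw [div_add_div _ _ (by positivity) two_ne_zero, le_div_iff₀ (by positivity), ← sq_abs (f x)]
    nlinarith [sq_nonneg (|f x| - t)]
  calc ∫ x in a..b, |f x|
      ≤ ∫ x in a..b, (f x ^ 2 / (2 * t) + t / 2) :=
        intervalIntegral.integral_mono_on hab (hf.abs.intervalIntegrable _ _)
          (Continuous.intervalIntegrable (by fun_prop) _ _) fun x _ => hpt x
    _ = (∫ x in a..b, f x ^ 2) / (2 * t) + t * (b - a) / 2 := by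
        rw [intervalIntegral.integral_add (Continuous.intervalIntegrable (by fun_prop) _ _)
          intervalIntegrable_const, intervalIntegral.integral_div, intervalIntegral.integral_const,
          smul_eq_mul]
        ring

theorem integral_sq_legendreP_sub_le {n : ℕ} (hn : 1 ≤ n) :
    ∫ y in (-1 : ℝ)..1, (legendreP (n + 1) y - legendreP (n - 1) y) ^ 2 ≤ 8 / (2 * n - 1) := by
  have hn' : (1 : ℝ) ≤ n := by exact_mod_cast hn
  calc ∫ y in (-1 : ℝ)..1, (legendreP (n + 1) y - legendreP (n - 1) y) ^ 2
      ≤ ∫ y in (-1 : ℝ)..1, (2 * legendreP (n + 1) y ^ 2 + 2 * legendreP (n - 1) y ^ 2) :=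
        intervalIntegral.integral_mono_on (by norm_num)
          (Continuous.intervalIntegrable (by fun_prop) _ _)
          (Continuous.intervalIntegrable (by fun_prop) _ _)
          fun y _ => by nlinarith [sq_nonneg (legendreP (n + 1) y + legendreP (n - 1) y)]
    _ = 4 / (2 * n + 3) + 4 / (2 * n - 1) := by
        rw [intervalIntegral.integral_add (Continuous.intervalIntegrable (by fun_prop) _ _)
          (Continuous.intervalIntegrable (by fun_prop) _ _),
          intervalIntegral.integral_const_mul, intervalIntegral.integral_const_mul,
          integral_sq_legendreP, integral_sq_legendreP, Nat.cast_sub hn]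
        push_cast
        ring_nf
    _ ≤ 8 / (2 * n - 1) := by
        have : 4 / (2 * n + 3 : ℝ) ≤ 4 / (2 * n - 1) :=
          div_le_div_of_nonneg_left (by norm_num) (by linarith) (by linarith)
        linarith [show (8 : ℝ) / (2 * n - 1) = 4 / (2 * n - 1) + 4 / (2 * n - 1) by ring]

theorem integral_abs_legendreP_sub_le {n : ℕ} (hn : 1 ≤ n) :
    ∫ y in (-1 : ℝ)..1, |legendreP (n + 1) y - legendreP (n - 1) y| ≤ 4 / √(2 * n - 1) := by
  have hn' : (1 : ℝ) ≤ n := by exact_mod_cast hn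
  set r := √(2 * n - 1 : ℝ)
  have hr : 0 < r := Real.sqrt_pos.mpr (by linarith)
  have hr2 : r ^ 2 = 2 * n - 1 := Real.sq_sqrt (by linarith)
  calc ∫ y in (-1 : ℝ)..1, |legendreP (n + 1) y - legendreP (n - 1) y|
      ≤ (∫ y in (-1 : ℝ)..1, (legendreP (n + 1) y - legendreP (n - 1) y) ^ 2) / (2 * (2 / r))
          + 2 / r * (1 - (-1)) / 2 :=
        integral_abs_le_integral_sq_div_add (by fun_prop) (by norm_num) (by positivity)
    _ ≤ 8 / (2 * n - 1) / (2 * (2 / r)) + 2 / r * (1 - (-1)) / 2 := by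
        gcongr
        exact integral_sq_legendreP_sub_le hn
    _ = 4 / r := by
        rw [← hr2]
        field_simp
        ring

theorem abs_legendreP_sub_le_two (m n : ℕ) {y : ℝ} (hy : y ∈ Icc (-1 : ℝ) 1) :
    |legendreP m y - legendreP n y| ≤ 2 :=
  (abs_sub _ _).trans <| by linarith [abs_legendreP_le_one m hy, abs_legendreP_le_one n hy]

theorem abs_integral_mul_le_mul_integral_abs {f h : ℝ → ℝ} {a b c d L : ℝ} (hca : c ≤ a)
    (hab : a ≤ b) (hbd : b ≤ d) (hL : 0 ≤ L) (hf : ∀ x ∈ Icc a b, |f x| ≤ L) (hh : Continuous h) :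
    |∫ x in a..b, f x * h x| ≤ L * ∫ x in c..d, |h x| := by
  calc |∫ x in a..b, f x * h x|
      ≤ ∫ x in a..b, L * |h x| := by
        rw [← Real.norm_eq_abs]
        refine intervalIntegral.norm_integral_le_of_norm_le hab (ae_of_all _ fun x hx => ?_)
          (Continuous.intervalIntegrable (by fun_prop) _ _)
        rw [Real.norm_eq_abs, abs_mul]
        exact mul_le_mul_of_nonneg_right (hf x (Ioc_subset_Icc_self hx)) (abs_nonneg _)
    _ = L * ∫ x in a..b, |h x| := intervalIntegral.integral_const_mul _ _
    _ ≤ L * ∫ x in c..d, |h x| := by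
        gcongr
        exact intervalIntegral.integral_mono_interval hca hab hbd
          (ae_of_all _ fun _ => abs_nonneg _) (hh.abs.intervalIntegrable _ _)

theorem two_div_sqrt_mul_sqrt_mul_sqrt_le {x : ℝ} (hx : 1 ≤ x) :
    2 / (√(2 * x + 1) * √(2 * x - 1) * √(2 * x + 1)) ≤ x ^ (-(3 / 2) : ℝ) := by
  have hx32 : x ^ (-(3 / 2) : ℝ) = 2 / (2 * x * √x) := by
    rw [Real.rpow_neg (by linarith), show (3 / 2 : ℝ) = 1 + 1 / 2 by norm_num,
      Real.rpow_add (by linarith), Real.rpow_one, ← Real.sqrt_eq_rpow]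
    field_simp
  have hsq : √(2 * x + 1) * √(2 * x + 1) = 2 * x + 1 := Real.mul_self_sqrt (by linarith)
  have hroot : √x ≤ √(2 * x - 1) := Real.sqrt_le_sqrt (by linarith)
  rw [hx32, mul_right_comm, hsq]
  gcongr
  linarith

section Partition

variable {K : ℕ} {b : ℕ → ℝ} {G : ℕ → ℝ → ℝ}

theorem mem_Icc_of_partition (hb0 : b 0 = -1) (hbK : b (K + 1) = 1)
    (hbmono : ∀ i ≤ K, b i < b (i + 1)) {i : ℕ} (hi : i ≤ K + 1) : b i ∈ Icc (-1 : ℝ) 1 := by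
  have hmono : MonotoneOn b (Iic (K + 1)) :=
    monotoneOn_of_le_add_one ordConnected_Iic fun j _ _ hj => (hbmono j (by simpa using hj)).le
  rw [← hb0, ← hbK]
  exact ⟨hmono (by simp) hi (zero_le i), hmono hi (by simp) hi⟩

theorem jumpSum_nonneg : 0 ≤ jumpSum K b G :=
  Finset.sum_nonneg fun _ _ => abs_nonneg _

theorem abs_Bterm_le (hb0 : b 0 = -1) (hbK : b (K + 1) = 1)
    (hbmono : ∀ i ≤ K, b i < b (i + 1)) (n : ℕ) :
    |Bterm K b G n| ≤ jumpSum K b G / √(2 * n + 1) := by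
  have hs : 0 < √(2 * n + 1 : ℝ) := Real.sqrt_pos.mpr (by positivity)
  have hsum : |∑ i ∈ Finset.Icc 1 K, (G (i - 1) (b i) - G i (b i)) *
      (legendreP (n + 1) (b i) - legendreP (n - 1) (b i))| ≤ 2 * jumpSum K b G := by
    rw [jumpSum, Finset.mul_sum]
    refine (Finset.abs_sum_le_sum_abs _ _).trans (Finset.sum_le_sum fun i hi => ?_)
    have hbi := mem_Icc_of_partition hb0 hbK hbmono (i := i) (by simp at hi; omega)
    rw [abs_mul, abs_sub_comm, mul_comm]
    exact mul_le_mul_of_nonneg_right (abs_legendreP_sub_le_two _ _ hbi) (abs_nonneg _)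
  rw [Bterm, abs_mul, abs_of_pos (by positivity)]
  calc 1 / (2 * √(2 * n + 1)) * |∑ i ∈ Finset.Icc 1 K, (G (i - 1) (b i) - G i (b i)) *
        (legendreP (n + 1) (b i) - legendreP (n - 1) (b i))|
      ≤ 1 / (2 * √(2 * n + 1)) * (2 * jumpSum K b G) := by gcongr
    _ = jumpSum K b G / √(2 * n + 1) := by field_simp

theorem abs_Aterm_le {L : ℝ} (hb0 : b 0 = -1) (hbK : b (K + 1) = 1)
    (hbmono : ∀ i ≤ K, b i < b (i + 1)) (hL : 0 ≤ L)
    (hGder : ∀ i ≤ K, ∀ y ∈ Icc (b i) (b (i + 1)),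
      |derivWithin (G i) (Icc (b i) (b (i + 1))) y| ≤ L)
    {n : ℕ} (hn : 1 ≤ n) :
    |Aterm K b G n| ≤ 2 * (K + 1) * L / (√(2 * n + 1) * √(2 * n - 1)) := by
  have hn' : (1 : ℝ) ≤ n := by exact_mod_cast hn
  have hs : 0 < √(2 * n + 1 : ℝ) := Real.sqrt_pos.mpr (by positivity)
  have hr : 0 < √(2 * n - 1 : ℝ) := Real.sqrt_pos.mpr (by linarith)
  have hpiece : ∀ i ∈ Finset.range (K + 1),
      |∫ y in (b i)..(b (i + 1)), derivWithin (G i) (Icc (b i) (b (i + 1))) y *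
        (legendreP (n + 1) y - legendreP (n - 1) y)| ≤ L * (4 / √(2 * n - 1)) := fun i hi => by
    have hiK : i ≤ K := Nat.lt_succ_iff.mp (Finset.mem_range.mp hi)
    refine (abs_integral_mul_le_mul_integral_abs
      (mem_Icc_of_partition hb0 hbK hbmono (i := i) (by omega)).1 (hbmono i hiK).le
      (mem_Icc_of_partition hb0 hbK hbmono (i := i + 1) (by omega)).2 hL (hGder i hiK)
      (by fun_prop)).trans ?_
    gcongr
    exact integral_abs_legendreP_sub_le hn
  rw [Aterm, abs_mul, abs_neg, abs_of_pos (by positivity)]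
  calc 1 / (2 * √(2 * n + 1)) * |∑ i ∈ Finset.range (K + 1),
        ∫ y in (b i)..(b (i + 1)), derivWithin (G i) (Icc (b i) (b (i + 1))) y *
          (legendreP (n + 1) y - legendreP (n - 1) y)|
      ≤ 1 / (2 * √(2 * n + 1)) * ((K + 1) * (L * (4 / √(2 * n - 1)))) := by
        gcongr
        refine (Finset.abs_sum_le_sum_abs _ _).trans ((Finset.sum_le_sum hpiece).trans ?_)
        simp
    _ = 2 * (K + 1) * L / (√(2 * n + 1) * √(2 * n - 1)) := by
        field_simp
        ring

theorem abs_Aterm_mul_abs_Bterm_le {L : ℝ} (hb0 : b 0 = -1) (hbK : b (K + 1) = 1)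
    (hbmono : ∀ i ≤ K, b i < b (i + 1)) (hL : 0 ≤ L)
    (hGder : ∀ i ≤ K, ∀ y ∈ Icc (b i) (b (i + 1)),
      |derivWithin (G i) (Icc (b i) (b (i + 1))) y| ≤ L)
    {n : ℕ} (hn : 1 ≤ n) :
    |Aterm K b G n| * |Bterm K b G n| ≤ (K + 1) * L * jumpSum K b G * (n : ℝ) ^ (-(3 / 2) : ℝ) := by
  have hn' : (1 : ℝ) ≤ n := by exact_mod_cast hn
  have hS := jumpSum_nonneg (K := K) (b := b) (G := G)
  calc |Aterm K b G n| * |Bterm K b G n|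
      ≤ 2 * (K + 1) * L / (√(2 * n + 1) * √(2 * n - 1)) * (jumpSum K b G / √(2 * n + 1)) :=
        mul_le_mul (abs_Aterm_le hb0 hbK hbmono hL hGder hn) (abs_Bterm_le hb0 hbK hbmono n)
          (abs_nonneg _) (by positivity)
    _ = (K + 1) * L * jumpSum K b G * (2 / (√(2 * n + 1) * √(2 * n - 1) * √(2 * n + 1))) := by
        ring
    _ ≤ (K + 1) * L * jumpSum K b G * (n : ℝ) ^ (-(3 / 2) : ℝ) := by
        gcongr
        exact two_div_sqrt_mul_sqrt_mul_sqrt_le hn'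

end Partition

theorem summable_add_rpow_neg {s a : ℝ} (hs : 1 < s) (ha : 0 ≤ a) :
    Summable fun k : ℕ => ((k : ℝ) + a) ^ (-s) :=
  ((Real.summable_one_div_nat_add_rpow a s).2 hs).congr fun k => by
    rw [abs_of_nonneg (by positivity), Real.rpow_neg (by positivity), one_div]

theorem tsum_le_mul_hzeta {f : ℕ → ℝ} {s a C : ℝ} (hs : 1 < s) (ha : 0 ≤ a)
    (hf0 : ∀ k, 0 ≤ f k) (hf : ∀ k, f k ≤ C * ((k : ℝ) + a) ^ (-s)) :
    ∑' k, f k ≤ C * hzeta s a := by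
  have hC := (summable_add_rpow_neg hs ha).mul_left C
  rw [hzeta, ← tsum_mul_left]
  exact (hC.of_nonneg_of_le hf0 hf).tsum_le_tsum hf hC

theorem tsum_abs_Aterm_mul_abs_Bterm_le_general
    (K : ℕ) (b : ℕ → ℝ) (L : ℝ) (G : ℕ → ℝ → ℝ)
    (hb0 : b 0 = -1) (hbK : b (K + 1) = 1)
    (hbmono : ∀ i ≤ K, b i < b (i + 1))
    (hL : 0 ≤ L)
    (hGder : ∀ i ≤ K, ∀ y ∈ Set.Icc (b i) (b (i + 1)),
      |derivWithin (G i) (Set.Icc (b i) (b (i + 1))) y| ≤ L)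
    (N : ℕ) (hN : 1 ≤ N) :
    (∑' k : ℕ, |Aterm K b G (N + k)| * |Bterm K b G (N + k)|) ≤
        Real.sqrt 2 * L * ((K : ℝ) + 1) * jumpSum K b G * hzeta (3 / 2) N ∧
      (∑' k : ℕ, (2 * ((N : ℝ) + (k : ℝ)) - 1) ^ (-(3 / 2) : ℝ)) ≤ hzeta (3 / 2) N := by
  have hS := jumpSum_nonneg (K := K) (b := b) (G := G)
  have hkN : ∀ k : ℕ, (1 : ℝ) ≤ (k : ℝ) + N := fun k => by
    have : (1 : ℝ) ≤ N := by exact_mod_cast hN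
    linarith [k.cast_nonneg (α := ℝ)]
  constructor
  · refine tsum_le_mul_hzeta (by norm_num) N.cast_nonneg (fun k => by positivity) fun k => ?_
    have hAB := abs_Aterm_mul_abs_Bterm_le hb0 hbK hbmono hL hGder (n := N + k) (by omega)
    rw [Nat.cast_add, add_comm (N : ℝ)] at hAB
    refine hAB.trans ?_
    have h2 := Real.one_le_sqrt.mpr (by norm_num : (1 : ℝ) ≤ 2)
    have hpow := Real.rpow_nonneg (zero_le_one.trans (hkN k)) (-(3 / 2))
    nlinarith [mul_nonneg (mul_nonneg (mul_nonneg (by positivity : (0 : ℝ) ≤ K + 1) hL) hS) hpow]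
  · rw [← one_mul (hzeta _ _)]
    refine tsum_le_mul_hzeta (by norm_num) N.cast_nonneg
      (fun k => Real.rpow_nonneg (by linarith [hkN k]) _) fun k => ?_
    rw [one_mul]
    exact Real.rpow_le_rpow_of_nonpos (by linarith [hkN k]) (by linarith [hkN k]) (by norm_num)

/-- bound on the cross terms, together with the comparison
Σ_{n=N}^∞ (2n-1)^(-3/2) ≤ ζ(3/2, N). -/
theorem tsum_abs_Aterm_mul_abs_Bterm_le
    (K : ℕ) (b : ℕ → ℝ) (L : ℝ) (G : ℕ → ℝ → ℝ) (g : ℝ → ℝ)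
    (hb0 : b 0 = -1) (hbK : b (K + 1) = 1)
    (hbmono : ∀ i ≤ K, b i < b (i + 1))
    (hL : 0 ≤ L)
    (hG : ∀ i ≤ K, ContDiffOn ℝ 1 (G i) (Set.Icc (b i) (b (i + 1))))
    (hGder : ∀ i ≤ K, ∀ y ∈ Set.Icc (b i) (b (i + 1)),
      |derivWithin (G i) (Set.Icc (b i) (b (i + 1))) y| ≤ L)
    (hg1 : ∀ i < K, ∀ y, b i ≤ y → y < b (i + 1) → g y = G i y)
    (hg2 : ∀ y ∈ Set.Icc (b K) (b (K + 1)), g y = G K y)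
    (N : ℕ) (hN : 1 ≤ N) :
    (∑' k : ℕ, |Aterm K b G (N + k)| * |Bterm K b G (N + k)|) ≤
        Real.sqrt 2 * L * ((K : ℝ) + 1) * jumpSum K b G * hzeta (3 / 2) N ∧
      (∑' k : ℕ, (2 * ((N : ℝ) + (k : ℝ)) - 1) ^ (-(3 / 2) : ℝ)) ≤ hzeta (3 / 2) N :=
  tsum_abs_Aterm_mul_abs_Bterm_le_general K b L G hb0 hbK hbmono hL hGder N hN
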